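/- Let V be a braided monoidal category and let A, B be categories enriched in V. The composition of the tensor product enriched category A ⊗ B satisfies the left unit axiom: for all objects a, a' of A and b, b' of B, writing M(x,x',x''; y,y',y'') := tensorμ A(x',x'') B(y',y'') A(x,x') B(y,y') ≫ (eComp x x' x'' ⊗ eComp y y' y'') and j_{(a',b')} := (λ_𝟙).inv ≫ (eId a' ⊗ eId b'), one has (j_{(a',b')} ▷ (A(a,a') ⊗ B(b,b'))) ≫ M(a,a',a'; b,b',b') = (λ_{A(a,a') ⊗ B(b,b')}).hom. -/

import Mathlib

open CategoryTheory MonoidalCategory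

universe w v u

/-- A (small) category enriched in a monoidal category `V`, with hom-objects `Hom a b`,
composition morphisms `eComp a b c : Hom b c ⊗ Hom a b ⟶ Hom a c` and identity elements
`eId a : 𝟙_ V ⟶ Hom a a`, satisfying the enriched associativity and unit axioms. -/
structure VCat (V : Type u) [Category.{v} V] [MonoidalCategory V] where
  Obj : Type w
  Hom : Obj → Obj → V
  eId : ∀ a, 𝟙_ V ⟶ Hom a a
  eComp : ∀ a b c, Hom b c ⊗ Hom a b ⟶ Hom a c
  assoc : ∀ a b c d, (eComp b c d ▷ Hom a b) ≫ eComp a b d =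
      (α_ (Hom c d) (Hom b c) (Hom a b)).hom ≫ (Hom c d ◁ eComp a b c) ≫ eComp a c d
  id_comp : ∀ a b, (eId b ▷ Hom a b) ≫ eComp a b b = (λ_ (Hom a b)).hom
  comp_id : ∀ a b, (Hom a b ◁ eId a) ≫ eComp a a b = (ρ_ (Hom a b)).hom

variable {V : Type u} [Category.{v} V] [MonoidalCategory V] [BraidedCategory V]

/-- The composition morphism of the tensor product `A ⊗ B` of two `V`-categories:
`M := tensorμ ≫ (eComp ⊗ eComp)`. -/
def tensorComp (A B : VCat V) (x x' x'' : A.Obj) (y y' y'' : B.Obj) :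
    (A.Hom x' x'' ⊗ B.Hom y' y'') ⊗ (A.Hom x x' ⊗ B.Hom y y') ⟶ A.Hom x x'' ⊗ B.Hom y y'' :=
  tensorμ (A.Hom x' x'') (B.Hom y' y'') (A.Hom x x') (B.Hom y y') ≫
    (A.eComp x x' x'' ⊗ₘ B.eComp y y' y'')


/-- The composition of the tensor product enriched category `A ⊗ B` satisfies the left unit
axiom, with identity element `j_{(a,b)} := (λ_𝟙).inv ≫ (eId a ⊗ eId b)`. -/
theorem tensorComp_id_comp (A B : VCat V) (a a' : A.Obj) (b b' : B.Obj) :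
    (((λ_ (𝟙_ V)).inv ≫ (A.eId a' ⊗ₘ B.eId b')) ▷ (A.Hom a a' ⊗ B.Hom b b')) ≫
        tensorComp A B a a' a' b b' b' =
      (λ_ (A.Hom a a' ⊗ B.Hom b b')).hom := by
  -- Naturality of `tensorμ` moves the identities past it, onto the separate unit axioms.
  calc _ = ((λ_ (𝟙_ V)).inv ▷ (A.Hom a a' ⊗ B.Hom b b')) ≫
          tensorμ (𝟙_ V) (𝟙_ V) (A.Hom a a') (B.Hom b b') ≫
            ((A.eId a' ▷ A.Hom a a' ≫ A.eComp a a' a') ⊗ₘ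
              (B.eId b' ▷ B.Hom b b' ≫ B.eComp b b' b')) := by
        rw [tensorComp, comp_whiskerRight, Category.assoc, tensorμ_natural_left_assoc,
          tensorHom_comp_tensorHom]
    _ = _ := by rw [A.id_comp, B.id_comp, ← tensor_left_unitality]
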